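/- arXiv:2310.01793 — 2 statements merged into one kernel-verified Lean document; each statement's English description precedes it below -/
import Mathlib

section
/- Let G be a finite group and H a non-trivial proper normal subgroup of G. For any odd integers k, l with 1 ≤ k, l ≤ |H|, H is a (0,k)-regular set of G if and only if H is a (0,l)-regular set of G. -/
open Set

/-- An `(a,b)`-regular set in a graph: a nonempty proper subset `D` of the vertex set such
that every vertex in `D` has exactly `a` neighbours in `D` and every vertex outside `D`
has exactly `b` neighbours in `D`. -/
def IsRegularSet {V : Type*} (G : SimpleGraph V) (D : Set V) (a b : ℕ) : Prop :=
  D.Nonempty ∧ D ≠ Set.univ ∧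
    (∀ v ∈ D, {u | G.Adj v u ∧ u ∈ D}.ncard = a) ∧
    (∀ v ∉ D, {u | G.Adj v u ∧ u ∈ D}.ncard = b)

/-- The Cayley graph of a group with connection set `S`: `x ~ y` iff `y * x⁻¹ ∈ S`
(stated symmetrically; when `S` is inverse-closed and `1 ∉ S` this is the usual notion). -/
def cayley {G : Type*} [Group G] (S : Set G) : SimpleGraph G where
  Adj x y := x ≠ y ∧ y * x⁻¹ ∈ S ∧ x * y⁻¹ ∈ S
  symm := ⟨fun x y h => ⟨h.1.symm, h.2.2, h.2.1⟩⟩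
  loopless := ⟨fun x h => h.1 rfl⟩

/-- `D` is a `(0,k)`-regular set of the group `G`: it is a `(0,k)`-regular set in some
Cayley graph of `G` (with inverse-closed connection set avoiding the identity). -/
def IsRegularSetOfGroup (G : Type*) [Group G] (D : Set G) (k : ℕ) : Prop :=
  ∃ S : Set G, (1 : G) ∉ S ∧ (∀ s ∈ S, s⁻¹ ∈ S) ∧ IsRegularSet (cayley S) D 0 k

/-! In `cayley S` the neighbours in `H` of a vertex `v` are the elements `s * v` with
`s ∈ S ∩ H v⁻¹`, so `H` is a `(0,k)`-regular set exactly when some inverse-closed `S` disjoint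
from `H` meets every non-trivial coset of `H` in `k` elements. If `q` is a coset with `q⁻¹ = q`,
then `S ∩ q` is closed under inversion, and an odd-sized set closed under inversion contains an
element with `x⁻¹ = x`. Conversely, from such an `x ∈ q` an inverse-closed subset of `q` of any
size `l ≤ |H|` is grown by adding pairs, and the cosets with `q⁻¹ ≠ q` are filled in mirror
pairs `T`, `T⁻¹`. So for odd `k ≤ |H|` the property only says that every `q ∈ G ⧸ H` with
`q⁻¹ = q` has a representative `x` with `x⁻¹ = x`, and this does not depend on `k`. -/

open scoped Pointwise

section Involution

variable {α : Type*} [InvolutiveInv α] {A : Set α}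

lemma exists_inv_eq_self_of_odd_ncard (hA : ∀ x ∈ A, x⁻¹ ∈ A) (hodd : Odd A.ncard) :
    ∃ x ∈ A, x⁻¹ = x := by
  by_contra! hfree
  have hfin := finite_of_ncard_pos hodd.pos
  -- Pairing each element with its inverse cancels the count modulo 2.
  have hsum : ∑ _x ∈ hfin.toFinset, (1 : ZMod 2) = 0 :=
    Finset.sum_involution (fun x _ => x⁻¹) (fun _ _ => by decide)
      (fun x hx _ => hfree x (by simpa using hx))
      (fun x hx => by simpa using hA x (by simpa using hx)) (fun x _ => inv_inv x)
  rw [Finset.sum_const, nsmul_one, ← ncard_eq_toFinset_card A hfin,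
    ZMod.natCast_eq_zero_iff_even] at hsum
  exact Nat.not_even_iff_odd.mpr hodd hsum

lemma exists_inv_closed_subset_ncard_eq_two (hA : ∀ x ∈ A, x⁻¹ ∈ A) (h2 : 2 ≤ A.ncard) :
    ∃ P ⊆ A, (∀ x ∈ P, x⁻¹ ∈ P) ∧ P.ncard = 2 := by
  by_cases hfix : ∀ x ∈ A, x⁻¹ = x
  · have hfin : A.Finite := finite_of_ncard_pos (by omega)
    obtain ⟨y, hy, z, hz, hyz⟩ := (one_lt_ncard hfin).mp (by omega)
    refine ⟨{y, z}, pair_subset hy hz, ?_, ncard_pair hyz⟩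
    rintro x (rfl | rfl)
    · simp [hfix x hy]
    · simp [hfix x hz]
  · push Not at hfix
    obtain ⟨y, hy, hyy⟩ := hfix
    refine ⟨{y, y⁻¹}, pair_subset hy (hA y hy), ?_, ncard_pair hyy.symm⟩
    rintro x (rfl | rfl) <;> simp

lemma exists_inv_closed_subset_ncard_eq (hA : ∀ x ∈ A, x⁻¹ ∈ A) {x₀ : α} (hx₀ : x₀ ∈ A)
    (hfix : x₀⁻¹ = x₀) {n : ℕ} (hn : n ≤ A.ncard) :
    ∃ T ⊆ A, (∀ x ∈ T, x⁻¹ ∈ T) ∧ T.ncard = n := by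
  induction n using Nat.strong_induction_on with
  | _ n ih =>
  match n, hn with
  | 0, _ => exact ⟨∅, empty_subset A, by simp, ncard_empty α⟩
  | 1, _ => exact ⟨{x₀}, singleton_subset_iff.mpr hx₀, by simp [hfix], ncard_singleton x₀⟩
  | n + 2, hn =>
    have hfin : A.Finite := finite_of_ncard_pos (by omega)
    obtain ⟨T, hTA, hT, hTn⟩ := ih n (by omega) (by omega)
    obtain ⟨P, hPA, hP, hPn⟩ := exists_inv_closed_subset_ncard_eq_two (A := A \ T)
      (fun x hx => ⟨hA x hx.1, fun h => hx.2 (by simpa using hT _ h)⟩)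
      (by rw [ncard_sdiff hTA (hfin.subset hTA)]; omega)
    refine ⟨T ∪ P, union_subset hTA (hPA.trans sdiff_subset), ?_, ?_⟩
    · rintro x (hx | hx)
      exacts [Or.inl (hT x hx), Or.inr (hP x hx)]
    · rw [ncard_union_eq (disjoint_sdiff_right.mono_right hPA) (hfin.subset hTA)
        (hfin.subset (hPA.trans sdiff_subset)), hTn, hPn]

lemma exists_inv_closed_ncard_inter_fibre {Q : Type*} [InvolutiveInv Q]
    (f : α → Q) (hf : ∀ x, f x⁻¹ = (f x)⁻¹) (T : Q → Set α) (hTf : ∀ q, T q ⊆ f ⁻¹' {q})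
    (hTinv : ∀ q, q⁻¹ = q → ∀ x ∈ T q, x⁻¹ ∈ T q) (hTcard : ∀ q, (T q⁻¹).ncard = (T q).ncard) :
    ∃ S : Set α, (∀ x ∈ S, x⁻¹ ∈ S) ∧ ∀ q, (S ∩ f ⁻¹' {q}).ncard = (T q).ncard := by
  -- Keep `T q` on one fibre of each pair `{q, q⁻¹}` and mirror it onto the other one.
  let _ : LinearOrder Q := WellOrderingRel.isWellOrder.linearOrder
  let U q := if q ≤ q⁻¹ then T q else (T q⁻¹)⁻¹
  have hUf q : U q ⊆ f ⁻¹' {q} := by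
    intro x hx
    simp only [U] at hx
    split_ifs at hx
    · exact hTf q hx
    · simpa [hf] using hTf q⁻¹ hx
  have hUinv q : U q⁻¹ = (U q)⁻¹ := by
    simp only [U, inv_inv]
    rcases lt_trichotomy q q⁻¹ with h | h | h
    · rw [if_neg h.not_ge, if_pos h.le]
    · rw [← h, if_pos le_rfl]
      ext x
      exact ⟨fun hx => by simpa using hTinv q h.symm _ hx,
        fun hx => by simpa using hTinv q h.symm _ hx⟩
    · rw [if_pos h.le, if_neg h.not_ge, inv_inv]
  refine ⟨{x | x ∈ U (f x)}, fun x hx => ?_, fun q => ?_⟩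
  · change x⁻¹ ∈ U (f x⁻¹)
    rw [hf, hUinv]
    simpa using hx
  · have hS : {x | x ∈ U (f x)} ∩ f ⁻¹' {q} = U q := by
      ext x
      constructor
      · rintro ⟨hx, rfl⟩
        exact hx
      · intro hx
        have hfx : f x = q := hUf q hx
        exact ⟨show x ∈ U (f x) by rwa [hfx], hfx⟩
    rw [hS]
    simp only [U]
    split_ifs
    · rfl
    · rw [ncard_inv, hTcard]

end Involution

section Cayley

variable {G : Type*} [Group G] {S : Set G}

lemma cayley_adj_inter_eq_image (hS1 : 1 ∉ S) (hSinv : ∀ s ∈ S, s⁻¹ ∈ S) (D : Set G) (v : G) :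
    {u | (cayley S).Adj v u ∧ u ∈ D} = (· * v) '' (S ∩ (· * v) ⁻¹' D) := by
  ext u
  constructor
  · rintro ⟨⟨-, hu, -⟩, huD⟩
    exact ⟨u * v⁻¹, ⟨hu, by simpa using huD⟩, by simp⟩
  · rintro ⟨s, ⟨hs, hsD⟩, rfl⟩
    refine ⟨⟨fun h => hS1 ?_, by simpa using hs, by simpa using hSinv s hs⟩, hsD⟩
    simpa using (mul_eq_right.mp h.symm) ▸ hs

lemma ncard_cayley_adj_inter (hS1 : 1 ∉ S) (hSinv : ∀ s ∈ S, s⁻¹ ∈ S) (D : Set G) (v : G) :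
    {u | (cayley S).Adj v u ∧ u ∈ D}.ncard = (S ∩ (· * v) ⁻¹' D).ncard := by
  rw [cayley_adj_inter_eq_image hS1 hSinv, ncard_image_of_injective _ (mul_left_injective v)]

end Cayley

section QuotientGroup

variable {G : Type*} [Group G] (H : Subgroup G) [H.Normal]

lemma preimage_mul_right_coe_subgroup (v : G) :
    (· * v) ⁻¹' (H : Set G) = QuotientGroup.mk ⁻¹' {(v : G ⧸ H)⁻¹} := by
  ext x
  simp [eq_inv_iff_mul_eq_one, ← QuotientGroup.mk_mul, QuotientGroup.eq_one_iff]

lemma preimage_mk_one_eq_coe_subgroup :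
    QuotientGroup.mk ⁻¹' {(1 : G ⧸ H)} = (H : Set G) := by
  ext x
  simp [QuotientGroup.eq_one_iff]

theorem isRegularSetOfGroup_coe_subgroup_iff [Finite G] (k : ℕ) :
    IsRegularSetOfGroup G H k ↔ H ≠ ⊤ ∧ ∃ S : Set G, (∀ s ∈ S, s⁻¹ ∈ S) ∧ Disjoint S H ∧
      ∀ q : G ⧸ H, q ≠ 1 → (S ∩ QuotientGroup.mk ⁻¹' {q}).ncard = k := by
  have hnbrs (S : Set G) (hS1 : 1 ∉ S) (hSinv : ∀ s ∈ S, s⁻¹ ∈ S) (v : G) :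
      {u | (cayley S).Adj v u ∧ u ∈ (H : Set G)}.ncard =
        (S ∩ QuotientGroup.mk ⁻¹' {(v : G ⧸ H)⁻¹}).ncard := by
    rw [ncard_cayley_adj_inter hS1 hSinv, preimage_mul_right_coe_subgroup]
  constructor
  · rintro ⟨S, hS1, hSinv, -, hne, h0, hk⟩
    refine ⟨fun h => hne (by simp [h]), S, hSinv, ?_, fun q hq => ?_⟩
    · have hempty := h0 1 H.one_mem
      rw [hnbrs S hS1 hSinv, ncard_eq_zero (toFinite _)] at hempty
      simpa [disjoint_iff_inter_eq_empty, preimage_mk_one_eq_coe_subgroup] using hempty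
    · obtain ⟨g, rfl⟩ := QuotientGroup.mk_surjective q
      have hg : g⁻¹ ∉ H := by simpa [QuotientGroup.eq_one_iff] using hq
      have hcount := hk g⁻¹ hg
      rwa [hnbrs S hS1 hSinv, QuotientGroup.mk_inv, inv_inv] at hcount
  · rintro ⟨htop, S, hSinv, hdisj, hk⟩
    have hS1 : 1 ∉ S := fun h => hdisj.notMem_of_mem_left h H.one_mem
    refine ⟨S, hS1, hSinv, ⟨1, H.one_mem⟩, fun h => htop (Subgroup.coe_eq_univ.mp h),
      fun v hv => ?_, fun v hv => ?_⟩
    · rw [hnbrs S hS1 hSinv, (QuotientGroup.eq_one_iff v).mpr hv, inv_one,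
        preimage_mk_one_eq_coe_subgroup, disjoint_iff_inter_eq_empty.mp hdisj, ncard_empty]
    · rw [hnbrs S hS1 hSinv]
      exact hk _ (by simpa [QuotientGroup.eq_one_iff] using hv)

end QuotientGroup

section NormalSubgroup

variable {G : Type*} [Group G] [Finite G] {H : Subgroup G} [H.Normal]

lemma IsRegularSetOfGroup.exists_mk_eq_inv_eq_self {k : ℕ} (hk : Odd k)
    (h : IsRegularSetOfGroup G H k) (q : G ⧸ H) (hq : q⁻¹ = q) :
    ∃ x : G, (x : G ⧸ H) = q ∧ x⁻¹ = x := by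
  obtain ⟨-, S, hSinv, -, hcount⟩ := (isRegularSetOfGroup_coe_subgroup_iff H k).mp h
  by_cases hq1 : q = 1
  · exact ⟨1, hq1.symm, inv_one⟩
  obtain ⟨x, ⟨-, hxq⟩, hx⟩ :=
    exists_inv_eq_self_of_odd_ncard (A := S ∩ QuotientGroup.mk ⁻¹' {q})
      (fun x ⟨hxS, hxq⟩ => ⟨hSinv x hxS, by simp_all [QuotientGroup.mk_inv]⟩)
      (hcount q hq1 ▸ hk)
  exact ⟨x, hxq, hx⟩

lemma isRegularSetOfGroup_of_exists_mk_eq_inv_eq_self (htop : H ≠ ⊤) {l : ℕ} (hlH : l ≤ Nat.card H)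
    (hlift : ∀ q : G ⧸ H, q⁻¹ = q → ∃ x : G, (x : G ⧸ H) = q ∧ x⁻¹ = x) :
    IsRegularSetOfGroup G H l := by
  classical
  have hfibre (q : G ⧸ H) : (QuotientGroup.mk ⁻¹' {q} : Set G).ncard = Nat.card H := by
    rw [← Nat.card_coe_set_eq, QuotientGroup.card_preimage_mk]
    simp
  have hchoice (q : G ⧸ H) : ∃ T ⊆ QuotientGroup.mk ⁻¹' {q}, (q⁻¹ = q → ∀ x ∈ T, x⁻¹ ∈ T) ∧
      T.ncard = if q = 1 then 0 else l := by
    have hn : (if q = 1 then 0 else l) ≤ (QuotientGroup.mk ⁻¹' {q} : Set G).ncard := by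
      rw [hfibre]
      split_ifs <;> omega
    by_cases hq : q⁻¹ = q
    · obtain ⟨x₀, hx₀, hfix⟩ := hlift q hq
      obtain ⟨T, hTq, hTinv, hTn⟩ := exists_inv_closed_subset_ncard_eq
        (A := QuotientGroup.mk ⁻¹' {q}) (fun x hx => by simp_all [QuotientGroup.mk_inv])
        hx₀ hfix hn
      exact ⟨T, hTq, fun _ => hTinv, hTn⟩
    · obtain ⟨T, hTq, hTn⟩ := exists_subset_card_eq hn
      exact ⟨T, hTq, fun h => absurd h hq, hTn⟩
  choose T hTq hTinv hTcard using hchoice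
  obtain ⟨S, hSinv, hS⟩ := exists_inv_closed_ncard_inter_fibre QuotientGroup.mk
    (QuotientGroup.mk_inv H) T hTq hTinv (fun q => by simp [hTcard])
  refine (isRegularSetOfGroup_coe_subgroup_iff H l).mpr
    ⟨htop, S, hSinv, ?_, fun q hq => by rw [hS, hTcard, if_neg hq]⟩
  have hS1 := hS 1
  rw [hTcard, if_pos rfl, ncard_eq_zero (toFinite _), preimage_mk_one_eq_coe_subgroup] at hS1
  exact disjoint_iff_inter_eq_empty.mpr hS1

end NormalSubgroup

theorem stmt12_general {G : Type*} [Group G] [Fintype G] (H : Subgroup G) [H.Normal]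
    (htop : H ≠ ⊤) (k l : ℕ)
    (hkH : k ≤ Nat.card H) (hko : Odd k)
    (hlH : l ≤ Nat.card H) (hlo : Odd l) :
    IsRegularSetOfGroup G (H : Set G) k ↔ IsRegularSetOfGroup G (H : Set G) l :=
  ⟨fun h => isRegularSetOfGroup_of_exists_mk_eq_inv_eq_self htop hlH
      (h.exists_mk_eq_inv_eq_self hko),
    fun h => isRegularSetOfGroup_of_exists_mk_eq_inv_eq_self htop hkH
      (h.exists_mk_eq_inv_eq_self hlo)⟩

theorem stmt12 {G : Type*} [Group G] [Fintype G] (H : Subgroup G) [H.Normal]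
    (hbot : H ≠ ⊥) (htop : H ≠ ⊤) (k l : ℕ)
    (hk1 : 1 ≤ k) (hkH : k ≤ Nat.card H) (hko : Odd k)
    (hl1 : 1 ≤ l) (hlH : l ≤ Nat.card H) (hlo : Odd l) :
    IsRegularSetOfGroup G (H : Set G) k ↔ IsRegularSetOfGroup G (H : Set G) l :=
  stmt12_general H htop k l hkH hko hlH hlo
end

section
/- Let G be a finite group and H a non-trivial proper normal subgroup of G. If |H| is odd or |G:H| is odd, then for any odd integer k with 1 ≤ k ≤ |H|, H is a (0,k)-regular set of G. -/
open Set

/-!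
Choose the connection set `S` inside `G \ H` so that it meets every nontrivial coset of `H` in
exactly `k` elements. Then `H` is independent in `Cay(G, S)`, and a vertex `v ∉ H` has as many
neighbours in `H` as `S` has elements in the coset `H v⁻¹`, namely `k`.

`S` has to be inverse-closed, and inversion maps the coset `q` onto `q⁻¹`. So pick the `k`
elements freely on one coset of each pair `{q, q⁻¹}` and invert them for the other one. If
`q = q⁻¹ ≠ 1` then `G ⧸ H` has even order, so `|H|` is odd. Inversion is then an involution of
the coset, which has odd size `|H|`, and a finite set of odd size closed under an involution has
an invariant subset of every size up to its own.
-/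

open Pointwise QuotientGroup

namespace Set

theorem sdiff_inv {α : Type*} [Inv α] (s t : Set α) : (s \ t)⁻¹ = s⁻¹ \ t⁻¹ := rfl

theorem exists_subset_inv_eq_self_ncard_eq {α : Type*} [InvolutiveInv α] {C : Set α}
    (hC : C.Finite) (hCinv : C⁻¹ = C) {k : ℕ} (hk : k ≤ C.ncard) (hpar : Even k ∨ Odd C.ncard) :
    ∃ t ⊆ C, t⁻¹ = t ∧ t.ncard = k := by
  induction hn : C.ncard using Nat.strong_induction_on generalizing C k with
  | _ n ih =>
  obtain rfl | ⟨x, hx⟩ := C.eq_empty_or_nonempty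
  · exact ⟨∅, empty_subset _, by simp, by simp only [ncard_empty] at *; omega⟩
  -- Remove the orbit `D = {x, x⁻¹}` (of size 1 or 2) from `C`, and put it into `t` whenever
  -- the parity condition survives for `k - |D|`.
  set D : Set α := {x, x⁻¹}
  have hDC : D ⊆ C := insert_subset hx (singleton_subset_iff.2 (hCinv ▸ inv_mem_inv.2 hx))
  have hDinv : D⁻¹ = D := by rw [inv_insert, inv_singleton, inv_inv, pair_comm]
  have hD : 1 ≤ D.ncard ∧ D.ncard ≤ 2 :=
    ⟨(ncard_pos (toFinite D)).2 (insert_nonempty _ _), (ncard_insert_le _ _).trans (by simp)⟩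
  have hDn : D.ncard ≤ n := hn ▸ ncard_le_ncard hDC hC
  have hC' : (C \ D).ncard = n - D.ncard := hn ▸ ncard_sdiff hDC (hC.subset hDC)
  have hC'inv : (C \ D)⁻¹ = C \ D := by rw [sdiff_inv, hCinv, hDinv]
  simp only [Nat.even_iff, Nat.odd_iff] at hpar ih
  by_cases htake : D.ncard ≤ k ∧ ((k - D.ncard) % 2 = 0 ∨ (n - D.ncard) % 2 = 1)
  · obtain ⟨t, htC, htinv, htk⟩ :=
      ih _ (by omega) hC.sdiff hC'inv (k := k - D.ncard) (by omega) (by omega) hC'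
    refine ⟨t ∪ D, union_subset (htC.trans sdiff_subset) hDC, by rw [union_inv, htinv, hDinv], ?_⟩
    rw [ncard_union_eq (disjoint_sdiff_left.mono_left htC) (hC.sdiff.subset htC) (toFinite D)]
    omega
  · obtain ⟨t, htC, htinv, htk⟩ :=
      ih _ (by omega) hC.sdiff hC'inv (k := k) (by omega) (by omega) hC'
    exact ⟨t, htC.trans sdiff_subset, htinv, htk⟩

end Set

theorem exists_inv_equivariant_choice {Q α : Type*} [InvolutiveInv Q] [InvolutiveInv α]
    (P : Q → Set α → Prop) (hP : ∀ q t, P q t → P q⁻¹ t⁻¹)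
    (hex : ∀ q, ∃ t, P q t ∧ (q⁻¹ = q → t⁻¹ = t)) :
    ∃ T : Q → Set α, ∀ q, P q (T q) ∧ T q⁻¹ = (T q)⁻¹ := by
  choose A hA hAinv using hex
  classical
  -- Any linear order selects the smaller element of each pair `{q, q⁻¹}`; `A` is kept there.
  let _ : LinearOrder Q := linearOrderOfSTO WellOrderingRel
  refine ⟨fun q => if q ≤ q⁻¹ then A q else (A q⁻¹)⁻¹, fun q => ⟨?_, ?_⟩⟩
  · dsimp only
    split_ifs
    · exact hA q
    · simpa using hP _ _ (hA q⁻¹)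
  · simp only [inv_inv]
    split_ifs with h₁ h₂ h₂
    · have hq : q⁻¹ = q := le_antisymm h₁ h₂
      rw [hq, hAinv q hq]
    · exact (inv_inv _).symm
    · rfl
    · exact absurd (le_of_not_ge h₁) h₂

theorem eq_one_of_inv_eq_self_of_odd_card {G : Type*} [Group G] (hG : Odd (Nat.card G)) {x : G}
    (hx : x⁻¹ = x) : x = 1 := by
  have h2 : orderOf x ∣ 2 := orderOf_dvd_of_pow_eq_one (by rw [sq, ← inv_mul_cancel x, hx])
  have hodd : Odd (orderOf x) := hG.of_dvd_nat (orderOf_dvd_natCard x)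
  rcases (Nat.dvd_prime Nat.prime_two).1 h2 with h | h
  · exact orderOf_eq_one_iff.1 h
  · exact absurd (h ▸ hodd) (by decide)

section Cayley

variable {G : Type*} [Group G] {S : Set G}

theorem cayley_adj_iff (h1 : (1 : G) ∉ S) (hinv : ∀ s ∈ S, s⁻¹ ∈ S) {x y : G} :
    (cayley S).Adj x y ↔ y * x⁻¹ ∈ S := by
  refine ⟨fun h => h.2.1, fun h => ⟨?_, h, by simpa using hinv _ h⟩⟩
  rintro rfl
  exact h1 (by simpa using h)

theorem ncard_cayley_adj_mem (h1 : (1 : G) ∉ S) (hinv : ∀ s ∈ S, s⁻¹ ∈ S) (D : Set G) (v : G) :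
    {u | (cayley S).Adj v u ∧ u ∈ D}.ncard = (S ∩ {g | g * v ∈ D}).ncard := by
  have : {u | (cayley S).Adj v u ∧ u ∈ D} = (· * v) '' (S ∩ {g | g * v ∈ D}) := by
    ext u
    simp [cayley_adj_iff h1 hinv]
  rw [this, Set.ncard_image_of_injective _ (mul_left_injective v)]

end Cayley

namespace QuotientGroup

variable {G : Type*} [Group G] (H : Subgroup G)

theorem ncard_preimage_mk_singleton (q : G ⧸ H) :
    (mk ⁻¹' {q} : Set G).ncard = Nat.card H := by
  rw [← Nat.card_coe_set_eq, card_preimage_mk, Nat.card_coe_set_eq, Set.ncard_singleton, mul_one]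

theorem inv_preimage_mk_singleton [H.Normal] (q : G ⧸ H) :
    (mk ⁻¹' {q} : Set G)⁻¹ = mk ⁻¹' {q⁻¹} := by
  ext g
  simp [inv_eq_iff_eq_inv]

end QuotientGroup

section RegularSet

variable {G : Type*} [Group G] {H : Subgroup G} [H.Normal] {k : ℕ}

theorem exists_subset_preimage_mk_ncard_eq [Finite G] (hodd : Odd (Nat.card H) ∨ Odd H.index)
    (hkH : k ≤ Nat.card H) {q : G ⧸ H} (hq : q ≠ 1) :
    ∃ t ⊆ mk ⁻¹' {q}, t.ncard = k ∧ (q⁻¹ = q → t⁻¹ = t) := by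
  have hfib := ncard_preimage_mk_singleton H q
  by_cases hqq : q⁻¹ = q
  · have hH : Odd (Nat.card H) := hodd.resolve_right fun hi =>
      hq (eq_one_of_inv_eq_self_of_odd_card (H.index_eq_card ▸ hi) hqq)
    obtain ⟨t, hsub, htinv, htk⟩ := Set.exists_subset_inv_eq_self_ncard_eq (Set.toFinite _)
      (by rw [inv_preimage_mk_singleton, hqq]) (hfib ▸ hkH) (Or.inr (hfib ▸ hH))
    exact ⟨t, hsub, htk, fun _ => htinv⟩
  · obtain ⟨t, hsub, htk⟩ := Set.exists_subset_card_eq (hfib ▸ hkH)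
    exact ⟨t, hsub, htk, fun h => absurd h hqq⟩

theorem exists_inv_closed_ncard_inter_preimage_mk
    (hfib : ∀ q : G ⧸ H, q ≠ 1 → ∃ t ⊆ mk ⁻¹' {q}, t.ncard = k ∧ (q⁻¹ = q → t⁻¹ = t)) :
    ∃ S : Set G, (∀ s ∈ S, s⁻¹ ∈ S) ∧ (∀ g ∈ S, (g : G ⧸ H) ≠ 1) ∧
      ∀ q : G ⧸ H, q ≠ 1 → (S ∩ mk ⁻¹' {q}).ncard = k := by
  obtain ⟨T, hT⟩ := exists_inv_equivariant_choice
    (fun (q : G ⧸ H) (t : Set G) => t ⊆ mk ⁻¹' {q} ∧ (q ≠ 1 → t.ncard = k))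
    (fun q t ⟨hsub, hcard⟩ => ⟨by simpa [inv_preimage_mk_singleton] using Set.inv_subset_inv.2 hsub,
      fun hq => by rw [Set.ncard_inv]; exact hcard (by simpa using hq)⟩)
    (fun q => by
      by_cases hq : q = 1
      · exact ⟨∅, ⟨Set.empty_subset _, fun h => absurd hq h⟩, fun _ => Set.inv_empty⟩
      · obtain ⟨t, hsub, hcard, hinv⟩ := hfib q hq
        exact ⟨t, ⟨hsub, fun _ => hcard⟩, hinv⟩)
  refine ⟨{g : G | (g : G ⧸ H) ≠ 1 ∧ g ∈ T g}, ?_, fun g hg => hg.1, fun q hq => ?_⟩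
  · rintro s ⟨hs1, hsT⟩
    refine ⟨by simpa using hs1, ?_⟩
    rw [mk_inv, (hT _).2]
    simpa using hsT
  · suffices {g : G | (g : G ⧸ H) ≠ 1 ∧ g ∈ T g} ∩ mk ⁻¹' {q} = T q from this ▸ (hT q).1.2 hq
    ext g
    constructor
    · rintro ⟨⟨-, hg⟩, rfl⟩
      exact hg
    · intro hg
      have hgq : (g : G ⧸ H) = q := (hT q).1.1 hg
      exact ⟨⟨hgq ▸ hq, hgq ▸ hg⟩, hgq⟩

theorem isRegularSetOfGroup_of_ncard_inter_preimage_mk (htop : H ≠ ⊤) {S : Set G}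
    (hinv : ∀ s ∈ S, s⁻¹ ∈ S) (hSH : ∀ g ∈ S, (g : G ⧸ H) ≠ 1)
    (hS : ∀ q : G ⧸ H, q ≠ 1 → (S ∩ mk ⁻¹' {q}).ncard = k) :
    IsRegularSetOfGroup G (H : Set G) k := by
  have h1 : (1 : G) ∉ S := fun h => hSH 1 h rfl
  refine ⟨S, h1, hinv, ⟨1, H.one_mem⟩, mt Subgroup.coe_eq_univ.1 htop, fun v hv => ?_,
    fun v hv => ?_⟩ <;> rw [ncard_cayley_adj_mem h1 hinv]
  · convert Set.ncard_empty G
    refine Set.eq_empty_of_forall_notMem fun g ⟨hgS, hgv⟩ => hSH g hgS ?_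
    exact (eq_one_iff g).2 (by simpa using H.mul_mem hgv (H.inv_mem hv))
  · have hv1 : (v : G ⧸ H)⁻¹ ≠ 1 := by simpa [eq_one_iff] using hv
    convert hS _ hv1 using 3
    ext g
    simp [← eq_one_iff, mul_eq_one_iff_eq_inv]

end RegularSet

theorem stmt13_general {G : Type*} [Group G] [Fintype G] (H : Subgroup G) [H.Normal]
    (htop : H ≠ ⊤)
    (hodd : Odd (Nat.card H) ∨ Odd H.index)
    (k : ℕ) (hkH : k ≤ Nat.card H) :
    IsRegularSetOfGroup G (H : Set G) k := by
  obtain ⟨S, hinv, hSH, hS⟩ := exists_inv_closed_ncard_inter_preimage_mk fun _ hq =>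
    exists_subset_preimage_mk_ncard_eq hodd hkH hq
  exact isRegularSetOfGroup_of_ncard_inter_preimage_mk htop hinv hSH hS

theorem stmt13 {G : Type*} [Group G] [Fintype G] (H : Subgroup G) [H.Normal]
    (hbot : H ≠ ⊥) (htop : H ≠ ⊤)
    (hodd : Odd (Nat.card H) ∨ Odd H.index)
    (k : ℕ) (hk1 : 1 ≤ k) (hkH : k ≤ Nat.card H) (hko : Odd k) :
    IsRegularSetOfGroup G (H : Set G) k :=
  stmt13_general H htop hodd k hkH
end
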